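/- arXiv:0804.1082 — 2 statements merged into one kernel-verified Lean document; each statement's English description precedes it below -/
import Mathlib

section
/- For every bisimplicial set X, the maps (φ_X)_n : Diag_n X → Tot_n X, x ↦ (x d^h_n d^h_{n−1} ⋯ d^h_{q+1} d^v_{q−1} ⋯ d^v_0)_{q=n,…,0}, are well defined (each component satisfies the compatibility condition defining Tot_n X) and assemble into a simplicial map Diag X → Tot X. Moreover X ↦ φ_X is natural in X. -/
namespace Paper

/-- clamped coface map `δ^k : [a] → [b]`. -/
def δOH (k a b : ℕ) : Fin (a+1) →o Fin (b+1) where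
  toFun i := ⟨min (if (i:ℕ) < k then (i:ℕ) else (i:ℕ)+1) b, Nat.lt_succ_of_le (Nat.min_le_right _ _)⟩
  monotone' := by
    intro i j hij
    have h : (i:ℕ) ≤ (j:ℕ) := hij
    simp only [Fin.mk_le_mk]
    split_ifs <;> omega

/-- clamped codegeneracy map `σ^k : [a] → [b]`. -/
def σOH (k a b : ℕ) : Fin (a+1) →o Fin (b+1) where
  toFun i := ⟨min (if (i:ℕ) ≤ k then (i:ℕ) else (i:ℕ)-1) b, Nat.lt_succ_of_le (Nat.min_le_right _ _)⟩
  monotone' := by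
    intro i j hij
    have h : (i:ℕ) ≤ (j:ℕ) := hij
    simp only [Fin.mk_le_mk]
    split_ifs <;> omega

/-- `τ^k : [n] → [1]`, sending `[0, n-k]` to `0` and the rest to `1`. -/
def τOH (n k : ℕ) : Fin (n+1) →o Fin 2 where
  toFun i := if (i:ℕ) + k ≤ n then 0 else 1
  monotone' := by
    intro i j hij
    have h : (i:ℕ) ≤ (j:ℕ) := hij
    dsimp only
    split_ifs with h1 h2 h3
    · exact le_refl _
    · exact Fin.zero_le _
    · exact absurd h3 (by omega)
    · exact le_refl _

/-- application of `θ : [m] → [n]` to a natural number (clamped). -/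
def fApp {m n : ℕ} (θ : Fin (m+1) →o Fin (n+1)) (x : ℕ) : ℕ :=
  (θ ⟨min x m, Nat.lt_succ_of_le (Nat.min_le_right _ _)⟩ : Fin (n+1))

theorem fApp_mono {m n : ℕ} (θ : Fin (m+1) →o Fin (n+1)) {x y : ℕ} (h : x ≤ y) :
    fApp θ x ≤ fApp θ y :=
  Fin.le_def.mp (θ.monotone (Fin.mk_le_mk.mpr (by omega)))

theorem fApp_le {m n : ℕ} (θ : Fin (m+1) →o Fin (n+1)) (x : ℕ) : fApp θ x ≤ n :=
  Nat.lt_succ_iff.mp (Fin.isLt _)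

theorem fApp_coe {m n : ℕ} (θ : Fin (m+1) →o Fin (n+1)) (p : Fin (m+1)) :
    fApp θ (p:ℕ) = (θ p : ℕ) := by
  have hp : (⟨min (p:ℕ) m, Nat.lt_succ_of_le (Nat.min_le_right _ _)⟩ : Fin (m+1)) = p :=
    Fin.ext (show min (p:ℕ) m = (p:ℕ) from by have := p.isLt; omega)
  unfold fApp
  rw [hp]

/-- `Spl_{≤ p}(θ) : [p] → [pθ]`. -/
def splLe {m n : ℕ} (θ : Fin (m+1) →o Fin (n+1)) (p : Fin (m+1)) :
    Fin ((p:ℕ)+1) →o Fin ((θ p : ℕ)+1) where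
  toFun i := ⟨fApp θ (i:ℕ), by
    have h1 : fApp θ (i:ℕ) ≤ fApp θ (p:ℕ) := fApp_mono θ (by have := i.isLt; omega)
    have h2 : fApp θ (p:ℕ) = (θ p : ℕ) := fApp_coe θ p
    omega⟩
  monotone' := by
    intro a b hab
    have h : (a:ℕ) ≤ (b:ℕ) := hab
    simp only [Fin.mk_le_mk]
    exact fApp_mono θ h

/-- `Spl_{≥ p}(θ) : [m-p] → [n-pθ]`. -/
def splGe {m n : ℕ} (θ : Fin (m+1) →o Fin (n+1)) (p : Fin (m+1)) :
    Fin (m - (p:ℕ) + 1) →o Fin (n - (θ p : ℕ) + 1) where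
  toFun i := ⟨fApp θ ((i:ℕ) + (p:ℕ)) - (θ p : ℕ), by
    have h1 : fApp θ ((i:ℕ) + (p:ℕ)) ≤ n := fApp_le θ _
    omega⟩
  monotone' := by
    intro a b hab
    have h : (a:ℕ) ≤ (b:ℕ) := hab
    simp only [Fin.mk_le_mk]
    have := fApp_mono θ (show (a:ℕ) + (p:ℕ) ≤ (b:ℕ) + (p:ℕ) by omega)
    omega

/-- the restriction `θ|_[i]^[j] : [i] → [j]` of `θ` (clamped). -/
def restrictOH {m n : ℕ} (θ : Fin (m+1) →o Fin (n+1)) (i j : ℕ) : Fin (i+1) →o Fin (j+1) where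
  toFun k := ⟨min (fApp θ (k:ℕ)) j, Nat.lt_succ_of_le (Nat.min_le_right _ _)⟩
  monotone' := by
    intro a b hab
    have h : (a:ℕ) ≤ (b:ℕ) := hab
    simp only [Fin.mk_le_mk]
    have := fApp_mono θ h
    omega

/-- ascending product `f a * f (a+1) * ⋯ * f (b-1)`. -/
def aProd {γ : Type*} [Monoid γ] (f : ℕ → γ) (a : ℕ) : ℕ → γ
  | 0 => 1
  | b+1 => if a ≤ b then aProd f a b * f b else 1

/-- descending product `f (b-1) * f (b-2) * ⋯ * f a`. -/
def dProd {γ : Type*} [Monoid γ] (f : ℕ → γ) (a : ℕ) : ℕ → γ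
  | 0 => 1
  | b+1 => if a ≤ b then f b * dProd f a b else 1

end Paper
namespace Paper

/-- A bisimplicial set, as a contravariant functor in two simplicial directions. -/
structure BiSSet where
  obj : ℕ → ℕ → Type
  map : ∀ {p p' q q' : ℕ}, (Fin (p+1) →o Fin (p'+1)) → (Fin (q+1) →o Fin (q'+1)) →
    obj p' q' → obj p q
  map_id : ∀ {p q : ℕ} (x : obj p q), map OrderHom.id OrderHom.id x = x
  map_comp : ∀ {p p' p'' q q' q'' : ℕ} (α : Fin (p+1) →o Fin (p'+1)) (α' : Fin (p'+1) →o Fin (p''+1))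
    (β : Fin (q+1) →o Fin (q'+1)) (β' : Fin (q'+1) →o Fin (q''+1)) (x : obj p'' q''),
    map α β (map α' β' x) = map (α'.comp α) (β'.comp β) x

namespace BiSSet

/-- horizontal face `d^h_k`. -/
def hface (X : BiSSet) (k : ℕ) {p q : ℕ} (x : X.obj p q) : X.obj (p-1) q :=
  X.map (δOH k (p-1) p) OrderHom.id x

/-- vertical face `d^v_k`. -/
def vface (X : BiSSet) (k : ℕ) {p q : ℕ} (x : X.obj p q) : X.obj p (q-1) :=
  X.map OrderHom.id (δOH k (q-1) q) x

/-- horizontal descending composite `d^h_{i+c} ⋯ d^h_{i+1}`. -/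
def hdcomp (X : BiSSet) : (i c : ℕ) → {p q : ℕ} → X.obj p q → X.obj (p - c) q
  | _, 0, _, _, x => x
  | i, c+1, _, _, x => X.hface (i+1) (X.hdcomp (i+1) c x)

/-- vertical descending composite `d^v_{i+c} ⋯ d^v_{i+1}`. -/
def vdcomp (X : BiSSet) : (i c : ℕ) → {p q : ℕ} → X.obj p q → X.obj p (q - c)
  | _, 0, _, _, x => x
  | i, c+1, _, _, x => X.vface (i+1) (X.vdcomp (i+1) c x)

/-- vertical descending composite `d^v_{c-1} ⋯ d^v_0`. -/
def vd0comp (X : BiSSet) : (c : ℕ) → {p q : ℕ} → X.obj p q → X.obj p (q - c)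
  | 0, _, _, x => x
  | c+1, _, _, x => X.vface 0 (X.vdcomp 0 c x)

/-- the condition defining `Tot_n X ⊆ ∏_{q=n}^{0} X_{q,n-q}`. -/
def totCond (X : BiSSet) (n : ℕ) (x : ∀ q : Fin (n+1), X.obj (q:ℕ) (n - (q:ℕ))) : Prop :=
  ∀ (q : ℕ) (h : q + 1 ≤ n),
    X.map (δOH (q+1) q (q+1)) OrderHom.id (x ⟨q+1, by omega⟩) =
    X.map OrderHom.id (δOH 0 (n - (q+1)) (n - q)) (x ⟨q, by omega⟩)

/-- the structure map `Tot_θ X` on underlying tuples, via the splittings of `θ`. -/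
def totRaw (X : BiSSet) {m n : ℕ} (θ : Fin (m+1) →o Fin (n+1))
    (x : ∀ q : Fin (n+1), X.obj (q:ℕ) (n - (q:ℕ))) : ∀ p : Fin (m+1), X.obj (p:ℕ) (m - (p:ℕ)) :=
  fun p => X.map (splLe θ p) (splGe θ p) (x (θ p))

/-- the components of `φ_X : Diag X → Tot X`,
`x ↦ (x d^h_n ⋯ d^h_{q+1} d^v_{q-1} ⋯ d^v_0)_{q=n,…,0}`. -/
def phiRaw (X : BiSSet) (n : ℕ) (x : X.obj n n) : ∀ q : Fin (n+1), X.obj (q:ℕ) (n - (q:ℕ)) :=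
  fun q => cast
    (congrArg (fun t => X.obj t (n - (q:ℕ))) (Nat.sub_sub_self (Nat.lt_succ_iff.mp q.isLt)))
    (X.vd0comp (q:ℕ) (X.hdcomp (q:ℕ) (n - (q:ℕ)) x))

end BiSSet

/-- morphisms of bisimplicial sets. -/
structure BiHom (X Y : BiSSet) where
  app : ∀ p q, X.obj p q → Y.obj p q
  comm : ∀ {p p' q q' : ℕ} (α : Fin (p+1) →o Fin (p'+1)) (β : Fin (q+1) →o Fin (q'+1))
    (x : X.obj p' q'), app p q (X.map α β x) = Y.map α β (app p' q' x)

end Paper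
/-!
Every composite of face maps of `X` is `X.map α β` for one pair of order homs `α, β`, so
`(φ_X)_n x q = X.map ι_q σ_q x`, where `ι_q : [q] → [n]` is the inclusion and
`σ_q : [n-q] → [n]` is the shift `j ↦ j + q`. All three claims then reduce, via functoriality
of `X.map` (and of `f` for naturality), to identities between explicit maps of finite ordinals.
-/

namespace Paper

@[simp]
theorem δOH_apply_val (k a b : ℕ) (i : Fin (a+1)) :
    (δOH k a b i : ℕ) = min (if (i:ℕ) < k then (i:ℕ) else (i:ℕ)+1) b := rfl

@[simp]
theorem splLe_apply_val {m n : ℕ} (θ : Fin (m+1) →o Fin (n+1)) (p : Fin (m+1))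
    (i : Fin ((p:ℕ)+1)) : (splLe θ p i : ℕ) = fApp θ i := rfl

@[simp]
theorem splGe_apply_val {m n : ℕ} (θ : Fin (m+1) →o Fin (n+1)) (p : Fin (m+1))
    (i : Fin (m - (p:ℕ) + 1)) : (splGe θ p i : ℕ) = fApp θ ((i:ℕ) + p) - θ p := rfl

theorem apply_le_fApp {m n : ℕ} (θ : Fin (m+1) →o Fin (n+1)) (p : Fin (m+1)) {x : ℕ}
    (h : (p:ℕ) ≤ x) : (θ p : ℕ) ≤ fApp θ x :=
  fApp_coe θ p ▸ fApp_mono θ h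

/-- The composite of cofaces `δ^{i+c} ∘ ⋯ ∘ δ^{i+1} : [p-c] → [p]`, skipping `i+1, …, i+c`. -/
def δBlock (i c p : ℕ) : Fin (p - c + 1) →o Fin (p + 1) where
  toFun j := ⟨min (if (j:ℕ) ≤ i then (j:ℕ) else (j:ℕ) + c) p,
    Nat.lt_succ_of_le (Nat.min_le_right _ _)⟩
  monotone' := by
    intro a b hab
    have h : (a:ℕ) ≤ (b:ℕ) := hab
    simp only [Fin.mk_le_mk]
    split_ifs <;> omega

@[simp]
theorem δBlock_apply_val (i c p : ℕ) (j : Fin (p - c + 1)) :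
    (δBlock i c p j : ℕ) = min (if (j:ℕ) ≤ i then (j:ℕ) else (j:ℕ) + c) p := rfl

theorem δBlock_zero (i p : ℕ) : δBlock i 0 p = OrderHom.id := by
  ext j
  have := j.isLt
  simp only [δBlock_apply_val, OrderHom.id_coe, id_eq]
  split_ifs <;> omega

theorem δBlock_comp_δOH (i c p : ℕ) :
    (δBlock (i+1) c p).comp (δOH (i+1) (p - c - 1) (p - c)) = δBlock i (c+1) p := by
  ext j
  have := j.isLt
  simp only [OrderHom.comp_coe, Function.comp_apply, δBlock_apply_val, δOH_apply_val]
  split_ifs <;> omega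

def shiftOH (n q : ℕ) : Fin (n - q + 1) →o Fin (n + 1) where
  toFun j := ⟨min ((j:ℕ) + q) n, Nat.lt_succ_of_le (Nat.min_le_right _ _)⟩
  monotone' := by
    intro a b hab
    have h : (a:ℕ) ≤ (b:ℕ) := hab
    simp only [Fin.mk_le_mk]
    omega

@[simp]
theorem shiftOH_apply_val (n q : ℕ) (j : Fin (n - q + 1)) :
    (shiftOH n q j : ℕ) = min ((j:ℕ) + q) n := rfl

theorem shiftOH_zero (n : ℕ) : shiftOH n 0 = OrderHom.id := by
  ext j
  have := j.isLt
  simp only [shiftOH_apply_val, OrderHom.id_coe, id_eq]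
  omega

theorem δBlock_zero_comp_δOH_zero {c q : ℕ} (hc : c < q) :
    (δBlock 0 c q).comp (δOH 0 (q - c - 1) (q - c)) = shiftOH q (c+1) := by
  ext j
  have := j.isLt
  simp only [OrderHom.comp_coe, Function.comp_apply, δBlock_apply_val, δOH_apply_val,
    shiftOH_apply_val]
  split_ifs <;> omega

def inclOH (n q : ℕ) : Fin (q + 1) →o Fin (n + 1) where
  toFun j := ⟨min (j:ℕ) n, Nat.lt_succ_of_le (Nat.min_le_right _ _)⟩
  monotone' := by
    intro a b hab
    have h : (a:ℕ) ≤ (b:ℕ) := hab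
    simp only [Fin.mk_le_mk]
    omega

@[simp]
theorem inclOH_apply_val (n q : ℕ) (j : Fin (q + 1)) : (inclOH n q j : ℕ) = min (j:ℕ) n := rfl

theorem apply_inclOH_val {m n : ℕ} (θ : Fin (m+1) →o Fin (n+1)) (q : ℕ) (j : Fin (q + 1)) :
    (θ (inclOH m q j) : ℕ) = fApp θ j := rfl

theorem apply_shiftOH_val {m n : ℕ} (θ : Fin (m+1) →o Fin (n+1)) (q : ℕ) (j : Fin (m - q + 1)) :
    (θ (shiftOH m q j) : ℕ) = fApp θ (j + q) := rfl

namespace BiSSet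

variable (X : BiSSet)

theorem map_congr {a n b m : ℕ} {α α' : Fin (a+1) →o Fin (n+1)} {β β' : Fin (b+1) →o Fin (m+1)}
    (hα : ∀ i, (α i : ℕ) = α' i) (hβ : ∀ j, (β j : ℕ) = β' j) (x : X.obj n m) :
    X.map α β x = X.map α' β' x := by
  obtain rfl : α = α' := OrderHom.ext _ _ (funext fun i => Fin.ext (hα i))
  obtain rfl : β = β' := OrderHom.ext _ _ (funext fun j => Fin.ext (hβ j))
  rfl

theorem cast_map {a a' b n m : ℕ} (h : a = a') (hc : X.obj a b = X.obj a' b)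
    (α : Fin (a+1) →o Fin (n+1)) (α' : Fin (a'+1) →o Fin (n+1))
    (hα : ∀ i : Fin (a'+1), (α ⟨i, by omega⟩ : ℕ) = α' i)
    (β : Fin (b+1) →o Fin (m+1)) (x : X.obj n m) :
    cast hc (X.map α β x) = X.map α' β x := by
  subst h
  exact X.map_congr hα (fun _ => rfl) x

theorem hdcomp_eq_map (c : ℕ) : ∀ (i : ℕ) {p q : ℕ} (x : X.obj p q),
    X.hdcomp i c x = X.map (δBlock i c p) OrderHom.id x := by
  induction c with
  | zero =>
    intro i p q x
    rw [δBlock_zero, X.map_id]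
    rfl
  | succ c ih =>
    intro i p q x
    show X.hface (i+1) (X.hdcomp (i+1) c x) = _
    rw [ih, hface, X.map_comp, δBlock_comp_δOH]
    rfl

theorem vdcomp_eq_map (c : ℕ) : ∀ (i : ℕ) {p q : ℕ} (x : X.obj p q),
    X.vdcomp i c x = X.map OrderHom.id (δBlock i c q) x := by
  induction c with
  | zero =>
    intro i p q x
    rw [δBlock_zero, X.map_id]
    rfl
  | succ c ih =>
    intro i p q x
    show X.vface (i+1) (X.vdcomp (i+1) c x) = _
    rw [ih, vface, X.map_comp, δBlock_comp_δOH]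
    rfl

theorem vd0comp_eq_map {c p q : ℕ} (hc : c ≤ q) (x : X.obj p q) :
    X.vd0comp c x = X.map OrderHom.id (shiftOH q c) x := by
  cases c with
  | zero =>
    rw [shiftOH_zero, X.map_id]
    rfl
  | succ c =>
    show X.vface 0 (X.vdcomp 0 c x) = _
    rw [vdcomp_eq_map, vface, X.map_comp, δBlock_zero_comp_δOH_zero hc]
    rfl

theorem phiRaw_eq_map (n : ℕ) (x : X.obj n n) (q : Fin (n+1)) :
    phiRaw X n x q = X.map (inclOH n q) (shiftOH n q) x := by
  have hq : (q:ℕ) ≤ n := Nat.lt_succ_iff.mp q.isLt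
  rw [phiRaw, hdcomp_eq_map, vd0comp_eq_map X hq, X.map_comp]
  refine X.cast_map (Nat.sub_sub_self hq) _ _ _ (fun i => ?_) _ x
  have := i.isLt
  simp only [OrderHom.comp_coe, Function.comp_apply, δBlock_apply_val, inclOH_apply_val,
    OrderHom.id_coe, id_eq]
  split_ifs <;> omega

theorem totCond_phiRaw (n : ℕ) (x : X.obj n n) : totCond X n (phiRaw X n x) := by
  intro q hq
  rw [phiRaw_eq_map, phiRaw_eq_map, X.map_comp, X.map_comp]
  refine X.map_congr (fun i => ?_) (fun j => ?_) x
  · have := i.isLt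
    simp only [OrderHom.comp_coe, Function.comp_apply, δOH_apply_val, inclOH_apply_val,
      OrderHom.id_coe, id_eq]
    split_ifs
    omega
  · have := j.isLt
    simp only [OrderHom.comp_coe, Function.comp_apply, δOH_apply_val, shiftOH_apply_val,
      OrderHom.id_coe, id_eq, Nat.not_lt_zero, if_false]
    omega

theorem totRaw_phiRaw {m n : ℕ} (θ : Fin (m+1) →o Fin (n+1)) (x : X.obj n n) :
    totRaw X θ (phiRaw X n x) = phiRaw X m (X.map θ θ x) := by
  funext p
  rw [totRaw, phiRaw_eq_map, phiRaw_eq_map, X.map_comp, X.map_comp]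
  refine X.map_congr (fun i => ?_) (fun j => ?_) x
  · have := fApp_le θ i
    simp only [OrderHom.comp_coe, Function.comp_apply, splLe_apply_val, inclOH_apply_val,
      apply_inclOH_val]
    omega
  · have := fApp_le θ (j + p)
    have := apply_le_fApp θ p (x := j + p) (by omega)
    simp only [OrderHom.comp_coe, Function.comp_apply, splGe_apply_val, shiftOH_apply_val,
      apply_shiftOH_val]
    omega

theorem phiRaw_natural {Y : BiSSet} (f : BiHom X Y) (n : ℕ) (x : X.obj n n) :
    (fun q : Fin (n+1) => f.app q (n - q) (phiRaw X n x q)) = phiRaw Y n (f.app n n x) := by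
  funext q
  rw [phiRaw_eq_map, phiRaw_eq_map, f.comm]

end BiSSet
end Paper

open Paper Paper.BiSSet in
/-- for every bisimplicial set `X` the maps `(φ_X)_n : Diag_n X → Tot_n X`
are well defined, assemble into a simplicial map `Diag X → Tot X`, and are natural in `X`. -/
theorem stmt_4 :
    (∀ (X : BiSSet) (n : ℕ) (x : X.obj n n), totCond X n (phiRaw X n x)) ∧
    (∀ (X : BiSSet) {m n : ℕ} (θ : Fin (m+1) →o Fin (n+1)) (x : X.obj n n),
      totRaw X θ (phiRaw X n x) = phiRaw X m (X.map θ θ x)) ∧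
    (∀ (X Y : BiSSet) (f : BiHom X Y) (n : ℕ) (x : X.obj n n),
      (fun q : Fin (n+1) => f.app (q:ℕ) (n - (q:ℕ)) (phiRaw X n x q)) =
        phiRaw Y n (f.app n n x)) :=
  ⟨totCond_phiRaw, totRaw_phiRaw, fun X _ f => phiRaw_natural X f⟩
end

section
/- For a simplicial group G, the assignment W̄_n G = ∏_{j=n−1}^{0} G_j with (g_{n−1},…,g_0) W̄_θ = (∏_{j=(i+1)θ−1}^{iθ} g_j G_{θ|_{[i]}^{[j]}})_{i=m−1,…,0} for monotone θ : [m] → [n] defines a simplicial set (the Kan classifying simplicial set W̄G), i.e., W̄_{id} = id and W̄_θ W̄_ψ = W̄_{ψθ}. -/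
namespace Paper

/-- A simplicial group, given by levels, structure maps, functoriality,
and levelwise multiplicativity. -/
structure SGrp where
  obj : ℕ → Type
  grp : ∀ n, Group (obj n)
  map : ∀ {m n : ℕ}, (Fin (m+1) →o Fin (n+1)) → obj n → obj m
  map_id : ∀ {n : ℕ} (x : obj n), map OrderHom.id x = x
  map_comp : ∀ {l m n : ℕ} (α : Fin (l+1) →o Fin (m+1)) (β : Fin (m+1) →o Fin (n+1)) (x : obj n),
    map α (map β x) = map (β.comp α) x
  map_mul : ∀ {m n : ℕ} (θ : Fin (m+1) →o Fin (n+1)) (x y : obj n),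
    map θ (x * y) = map θ x * map θ y

attribute [instance] SGrp.grp

namespace SGrp

/-- face `d_k : G_N → G_{N-1}` -/
def face (G : SGrp) (k : ℕ) {N : ℕ} : G.obj N → G.obj (N-1) := G.map (δOH k (N-1) N)

/-- degeneracy `s_k : G_M → G_{M+1}` -/
def deg (G : SGrp) (k : ℕ) {M : ℕ} : G.obj M → G.obj (M+1) := G.map (σOH k (M+1) M)

/-- transport between levels (junk value `1` when levels differ). -/
def gcast (G : SGrp) {a : ℕ} (b : ℕ) (x : G.obj a) : G.obj b := if h : a = b then h ▸ x else 1

/-- descending composite of faces `d_{i+c} d_{i+c-1} ⋯ d_{i+1}`. -/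
def dcomp (G : SGrp) : (i c : ℕ) → {N : ℕ} → G.obj N → G.obj (N - c)
  | _, 0, _, x => x
  | i, c+1, _, x => G.face (i+1) (G.dcomp (i+1) c x)

/-- ascending composite of degeneracies `s_i s_{i+1} ⋯ s_{i+c-1}`. -/
def scomp (G : SGrp) : (i c : ℕ) → {M : ℕ} → G.obj M → G.obj (M + c)
  | _, 0, _, x => x
  | i, c+1, _, x => G.deg (i+c) (G.scomp i c x)

/-- `x ↦ x d_j ⋯ d_{i+1} s_i ⋯ s_{j-1}`, an endomap of `G_N`. -/
def ds (G : SGrp) (i j : ℕ) {N : ℕ} (x : G.obj N) : G.obj N :=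
  G.gcast N (G.scomp i (min (j - i) N) (G.dcomp i (min (j - i) N) x))

/-- `x ↦ x d_j ⋯ d_{i+1} s_i ⋯ s_{n-1} : G_j → G_n`. -/
def dsTo (G : SGrp) (i n : ℕ) {j : ℕ} (x : G.obj j) : G.obj n :=
  G.gcast n (G.scomp i (n - i) (G.gcast i (G.dcomp i (j - i) x)))

/-- the `y_i` of the section `S_G`, defined by descending recursion (with fuel). -/
def yAux (G : SGrp) (n : ℕ) (g : ∀ j : ℕ, G.obj j) : ℕ → ℕ → G.obj n
  | 0, _ => 1
  | fuel+1, i =>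
      aProd (fun j => G.ds i j (G.yAux n g fuel j)⁻¹) (i+1) n *
      dProd (fun j => G.dsTo i n (g j)) i n

/-- `W̄_n G = ∏_{j = n-1}^{0} G_j`. -/
def WbarN (G : SGrp) (n : ℕ) : Type := ∀ j : Fin n, G.obj (j:ℕ)

/-- extension of a tuple in `W̄_n G` by `1`. -/
def gE (G : SGrp) {n : ℕ} (g : G.WbarN n) : ∀ j : ℕ, G.obj j :=
  fun j => if h : j < n then g ⟨j, h⟩ else 1

/-- the coretraction `(S_G)_n : W̄_n G → Diag_n NG = (G_n)^n`. -/
def SGn (G : SGrp) (n : ℕ) (g : G.WbarN n) : Fin n → G.obj n :=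
  fun i => G.yAux n (G.gE g) n (i:ℕ)

/-- extension of a tuple in `(G_n)^n` by `1`. -/
def xE (G : SGrp) {n : ℕ} (x : Fin n → G.obj n) : ℕ → G.obj n :=
  fun j => if h : j < n then x ⟨j, h⟩ else 1

/-- the structure map `W̄_θ : W̄_n G → W̄_m G` of the Kan classifying simplicial set. -/
def wbarMap (G : SGrp) {m n : ℕ} (θ : Fin (m+1) →o Fin (n+1)) (g : G.WbarN n) : G.WbarN m :=
  fun i => dProd (fun j => G.map (restrictOH θ (i:ℕ) j) (G.gE g j))
    ((θ i.castSucc : Fin (n+1)) : ℕ) ((θ i.succ : Fin (n+1)) : ℕ)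

/-- the structure map `(Diag NG)_θ : (G_n)^n → (G_m)^m` of the diagonal of the nerve. -/
def diagMap (G : SGrp) {m n : ℕ} (θ : Fin (m+1) →o Fin (n+1)) (x : Fin n → G.obj n) :
    Fin m → G.obj m :=
  fun i => dProd (fun j => G.map θ (G.xE x j))
    ((θ i.castSucc : Fin (n+1)) : ℕ) ((θ i.succ : Fin (n+1)) : ℕ)

/-- the retraction `(D_G)_n : Diag_n NG → W̄_n G`, `(g_i)_i ↦ (g_i d_n ⋯ d_{i+1})_i`. -/
def DGn (G : SGrp) (n : ℕ) (x : Fin n → G.obj n) : G.WbarN n :=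
  fun i => G.gcast (i:ℕ) (G.dcomp (i:ℕ) (n - (i:ℕ)) (x i))

/-- the components `y_i^{(n+1-k)}` of the homotopy `H`, by descending recursion (with fuel). -/
def hAux (G : SGrp) (n k : ℕ) (g : ℕ → G.obj n) : ℕ → ℕ → G.obj n
  | 0, _ => 1
  | fuel+1, i =>
      if k ≤ i + 1 then g i
      else
        aProd (fun j => G.ds i j (G.hAux n k g fuel j)⁻¹) (i+1) (k-1) *
        dProd (fun j => G.ds i (k-1) (g j)) i (k-1)

end SGrp

/-- recover `k` from the simplex `τ^{n+1-k} ∈ Δ^1_n`: the number of vertices sent to `0`. -/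
def kOf {n : ℕ} (t : Fin (n+1) →o Fin 2) : ℕ :=
  (Finset.univ.filter (fun i => t i = 0)).card

namespace SGrp

/-- the homotopy `H_n : Diag_n NG × Δ^1_n → Diag_n NG`. -/
def Hn (G : SGrp) (n : ℕ) (x : Fin n → G.obj n) (t : Fin (n+1) →o Fin 2) : Fin n → G.obj n :=
  fun i => G.hAux n (kOf t) (G.xE x) (n+1) (i:ℕ)

end SGrp

/-- morphisms of simplicial groups. -/
structure SGrpHom (G G' : SGrp) where
  app : ∀ n, G.obj n → G'.obj n
  comm : ∀ {m n : ℕ} (θ : Fin (m+1) →o Fin (n+1)) (x : G.obj n),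
    app m (G.map θ x) = G'.map θ (app n x)
  mul : ∀ (n : ℕ) (x y : G.obj n), app n (x * y) = app n x * app n y

section DescendingProduct

variable {M : Type*} [Monoid M]

@[simp]
theorem dProd_self (f : ℕ → M) (a : ℕ) : dProd f a a = 1 := by
  cases a <;> simp [dProd]

theorem dProd_succ_of_le (f : ℕ → M) {a b : ℕ} (h : a ≤ b) :
    dProd f a (b + 1) = f b * dProd f a b := by
  simp [dProd, h]

theorem dProd_succ_self (f : ℕ → M) (a : ℕ) : dProd f a (a + 1) = f a := by
  rw [dProd_succ_of_le f le_rfl, dProd_self, mul_one]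

theorem dProd_mul_dProd (f : ℕ → M) {a b c : ℕ} (hab : a ≤ b) (hbc : b ≤ c) :
    dProd f b c * dProd f a b = dProd f a c := by
  induction c, hbc using Nat.le_induction with
  | base => rw [dProd_self, one_mul]
  | succ c hbc ih =>
    rw [dProd_succ_of_le f hbc, dProd_succ_of_le f (hab.trans hbc), mul_assoc, ih]

theorem dProd_congr {f g : ℕ → M} {a b : ℕ} (h : ∀ j, a ≤ j → j < b → f j = g j) :
    dProd f a b = dProd g a b := by
  induction b with
  | zero => rfl
  | succ b ih =>
    by_cases hab : a ≤ b
    · rw [dProd_succ_of_le f hab, dProd_succ_of_le g hab, h b hab b.lt_succ_self,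
        ih fun j hj hjb => h j hj (hjb.trans b.lt_succ_self)]
    · simp [dProd, hab]

theorem dProd_dProd (f : ℕ → M) {F : ℕ → ℕ} (hF : Monotone F) {a b : ℕ} (hab : a ≤ b) :
    dProd (fun j => dProd f (F j) (F (j + 1))) a b = dProd f (F a) (F b) := by
  induction b, hab using Nat.le_induction with
  | base => simp
  | succ b hab ih =>
    rw [dProd_succ_of_le _ hab, ih, dProd_mul_dProd f (hF hab) (hF b.le_succ)]

theorem map_dProd {N F : Type*} [Monoid N] [FunLike F M N] [MonoidHomClass F M N] (φ : F)
    (f : ℕ → M) (a b : ℕ) : φ (dProd f a b) = dProd (fun j => φ (f j)) a b := by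
  induction b with
  | zero => exact map_one φ
  | succ b ih =>
    by_cases hab : a ≤ b
    · rw [dProd_succ_of_le _ hab, dProd_succ_of_le _ hab, map_mul, ih]
    · simp [dProd, hab]

end DescendingProduct

theorem fApp_id {n x : ℕ} (hx : x ≤ n) : fApp (OrderHom.id : Fin (n + 1) →o Fin (n + 1)) x = x :=
  min_eq_left hx

theorem fApp_comp {l m n : ℕ} (ψ : Fin (l + 1) →o Fin (m + 1)) (θ : Fin (m + 1) →o Fin (n + 1))
    (x : ℕ) : fApp (θ.comp ψ) x = fApp θ (fApp ψ x) := by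
  rw [fApp, OrderHom.comp_coe, Function.comp_apply, ← fApp_coe]
  rfl

theorem fApp_castSucc {m n : ℕ} (θ : Fin (m + 1) →o Fin (n + 1)) (i : Fin m) :
    fApp θ i = (θ i.castSucc : ℕ) :=
  fApp_coe θ i.castSucc

theorem fApp_succ {m n : ℕ} (θ : Fin (m + 1) →o Fin (n + 1)) (i : Fin m) :
    fApp θ (i + 1) = (θ i.succ : ℕ) :=
  fApp_coe θ i.succ

theorem restrictOH_id {n i : ℕ} (hi : i ≤ n) :
    restrictOH (OrderHom.id : Fin (n + 1) →o Fin (n + 1)) i i = OrderHom.id := by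
  ext a
  have ha : (a : ℕ) ≤ i := Nat.lt_succ_iff.mp a.isLt
  show min (fApp OrderHom.id a) i = a
  rw [fApp_id (ha.trans hi), min_eq_left ha]

theorem restrictOH_comp {l m n : ℕ} (ψ : Fin (l + 1) →o Fin (m + 1))
    (θ : Fin (m + 1) →o Fin (n + 1)) {i j : ℕ} (k : ℕ) (hij : fApp ψ i ≤ j) :
    (restrictOH θ j k).comp (restrictOH ψ i j) = restrictOH (θ.comp ψ) i k := by
  ext a
  have ha : fApp ψ a ≤ j := (fApp_mono ψ (Nat.lt_succ_iff.mp a.isLt)).trans hij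
  show min (fApp θ (min (fApp ψ a) j)) k = min (fApp (θ.comp ψ) a) k
  rw [min_eq_left ha, fApp_comp]

namespace SGrp

variable (G : SGrp)

def mapHom {m n : ℕ} (θ : Fin (m + 1) →o Fin (n + 1)) : G.obj n →* G.obj m :=
  MonoidHom.mk' (G.map θ) (G.map_mul θ)

theorem map_dProd {m n : ℕ} (θ : Fin (m + 1) →o Fin (n + 1)) (f : ℕ → G.obj n) (a b : ℕ) :
    G.map θ (dProd f a b) = dProd (fun j => G.map θ (f j)) a b :=
  Paper.map_dProd (G.mapHom θ) f a b

theorem wbarMap_apply {m n : ℕ} (θ : Fin (m + 1) →o Fin (n + 1)) (g : G.WbarN n) (i : Fin m) :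
    G.wbarMap θ g i =
      dProd (fun j => G.map (restrictOH θ i j) (G.gE g j)) (fApp θ i) (fApp θ (i + 1)) := by
  rw [fApp_castSucc, fApp_succ]
  rfl

theorem gE_of_lt {n j : ℕ} (g : G.WbarN n) (hj : j < n) : G.gE g j = g ⟨j, hj⟩ :=
  dif_pos hj

theorem wbarMap_id {n : ℕ} (g : G.WbarN n) : G.wbarMap OrderHom.id g = g := by
  funext i
  have hi : (i : ℕ) ≤ n := i.isLt.le
  rw [wbarMap_apply, fApp_id hi, fApp_id i.isLt, dProd_succ_self, restrictOH_id hi, G.map_id,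
    G.gE_of_lt g i.isLt]

theorem wbarMap_comp {l m n : ℕ} (ψ : Fin (l + 1) →o Fin (m + 1))
    (θ : Fin (m + 1) →o Fin (n + 1)) (g : G.WbarN n) :
    G.wbarMap ψ (G.wbarMap θ g) = G.wbarMap (θ.comp ψ) g := by
  funext i
  rw [wbarMap_apply, wbarMap_apply, fApp_comp, fApp_comp,
    ← dProd_dProd _ (fun _ _ => fApp_mono θ) (fApp_mono ψ (Nat.le_succ i))]
  refine dProd_congr fun j hij hj => ?_
  rw [G.gE_of_lt _ (hj.trans_le (fApp_le ψ _)), wbarMap_apply, map_dProd]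
  refine dProd_congr fun k _ _ => ?_
  rw [G.map_comp, restrictOH_comp ψ θ k hij]

end SGrp

end Paper

open Paper Paper.SGrp in
/-- the Kan classifying construction `W̄G` of a simplicial group `G`
is a simplicial set. -/
theorem stmt_5 (G : SGrp) :
    (∀ {n : ℕ} (g : G.WbarN n), G.wbarMap OrderHom.id g = g) ∧
    (∀ {l m n : ℕ} (ψ : Fin (l+1) →o Fin (m+1)) (θ : Fin (m+1) →o Fin (n+1)) (g : G.WbarN n),
      G.wbarMap ψ (G.wbarMap θ g) = G.wbarMap (θ.comp ψ) g) :=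
  ⟨G.wbarMap_id, G.wbarMap_comp⟩
end
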